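/- arXiv:2205.10521 — 2 statements merged into one kernel-verified Lean document; each statement's English description precedes it below -/
import Mathlib

section
/- Let X and Y be normed vector spaces over ℝ, let ι : X → Y be a compact continuous linear operator, let (Ω, 𝔽, ℙ) be a probability space, let p ∈ (0,∞) and C ≥ 0, and let (ξ_n)_{n∈ℕ} be a sequence of Borel-measurable random variables ξ_n : Ω → X satisfying 𝔼‖ξ_n‖_X^p ≤ C for every n. Then the family of laws of (ι ∘ ξ_n)_{n∈ℕ} (the pushforward probability measures ℙ ∘ (ι ∘ ξ_n)^{-1} on Y) is tight: for every ε > 0 there is a compact set K ⊆ Y with ℙ(ι(ξ_n) ∉ K) ≤ ε for all n. (This is the Markov-inequality argument underlying the tightness Lemmas 3.3, 3.4 and 3.6 of the paper.) -/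
open MeasureTheory

/-- Tightness via the Markov inequality: if `ι : X → Y` is a compact continuous linear
operator and the random variables `ξ n : Ω → X` have uniformly bounded `p`-th moments,
then the laws of `ι ∘ ξ n` form a tight family of probability measures on `Y`.
(This is the argument underlying Lemmas 3.3, 3.4 and 3.6.) -/
theorem tightness_of_bounded_moments
    {X Y : Type*} [NormedAddCommGroup X] [NormedSpace ℝ X]
    [NormedAddCommGroup Y] [NormedSpace ℝ Y]
    [MeasurableSpace X] [BorelSpace X]
    {Ω : Type*} [MeasureSpace Ω] [IsProbabilityMeasure (volume : Measure Ω)]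
    (ι : X →L[ℝ] Y) (hι : IsCompactOperator ι)
    (p C : ℝ) (hp : 0 < p) (hC : 0 ≤ C)
    (ξ : ℕ → Ω → X) (hmeas : ∀ n, Measurable (ξ n))
    (hbound : ∀ n, (∫⁻ ω, ENNReal.ofReal (‖ξ n ω‖ ^ p)) ≤ ENNReal.ofReal C) :
    ∀ ε : ℝ, 0 < ε → ∃ K : Set Y, IsCompact K ∧
      ∀ n, volume {ω | ι (ξ n ω) ∉ K} ≤ ENNReal.ofReal ε := by
  intro ε hε
  -- choose radius R with C / R^p ≤ ε
  set R : ℝ := (C / ε) ^ (1 / p) + 1 with hR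
  have hRpos : 0 < R := by positivity
  have hRp : C / R ^ p ≤ ε := by
    have h1 : (C / ε) ^ (1 / p) < R := by simp [hR]
    have h2 : C / ε ≤ R ^ p := by
      calc C / ε = ((C / ε) ^ (1 / p)) ^ p := by
            rw [← Real.rpow_mul (by positivity), one_div_mul_cancel hp.ne', Real.rpow_one]
        _ ≤ R ^ p := Real.rpow_le_rpow (by positivity) h1.le hp.le
    rw [div_le_iff₀ hε] at h2
    rw [div_le_iff₀ (by positivity : (0:ℝ) < R ^ p)]
    linarith
  obtain ⟨K, hKc, hKsub⟩ := hι.image_closedBall_subset_compact (𝕜₁ := ℝ) R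
  refine ⟨K, hKc, fun n => ?_⟩
  have hsub : {ω | ι (ξ n ω) ∉ K} ⊆ {ω | ENNReal.ofReal (R ^ p) ≤ ENNReal.ofReal (‖ξ n ω‖ ^ p)} := by
    intro ω hω
    simp only [Set.mem_setOf_eq] at hω ⊢
    by_contra h
    push_neg at h
    have hlt : ‖ξ n ω‖ ^ p < R ^ p := by
      rw [ENNReal.ofReal_lt_ofReal_iff (by positivity)] at h
      exact h
    have : ‖ξ n ω‖ ≤ R := by
      by_contra hcon
      push_neg at hcon
      exact absurd (Real.rpow_le_rpow (by positivity) hcon.le hp.le) (not_le.mpr hlt)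
    exact hω (hKsub ⟨ξ n ω, Metric.mem_closedBall.mpr (by simpa using this), rfl⟩)
  calc volume {ω | ι (ξ n ω) ∉ K}
      ≤ volume {ω | ENNReal.ofReal (R ^ p) ≤ ENNReal.ofReal (‖ξ n ω‖ ^ p)} :=
        measure_mono hsub
    _ ≤ (∫⁻ ω, ENNReal.ofReal (‖ξ n ω‖ ^ p)) / ENNReal.ofReal (R ^ p) :=
        meas_ge_le_lintegral_div
          (ENNReal.measurable_ofReal.comp
            (((continuous_id.rpow_const (fun _ => Or.inr hp.le)).measurable).comp
              (hmeas n).norm)).aemeasurable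
          (ENNReal.ofReal_pos.mpr (by positivity)).ne' ENNReal.ofReal_ne_top
    _ ≤ ENNReal.ofReal C / ENNReal.ofReal (R ^ p) :=
        ENNReal.div_le_div_right (hbound n) _
    _ = ENNReal.ofReal (C / R ^ p) := by
        rw [ENNReal.ofReal_div_of_pos (by positivity)]
    _ ≤ ENNReal.ofReal ε := ENNReal.ofReal_le_ofReal hRp
end

section
/- Let L ≥ 0 and let g : [−1,1] → ℝ be L-Lipschitz with g(−1) = g(1) = 0. Then g(x)² ≤ L²·(1 − x²) for every x ∈ [−1,1]. Consequently, for 0 < θ < θ₀ and the Flory–Huggins potential F, one has |F''(x)|·g(x)² ≤ (θ + θ₀)·L² for every x ∈ (−1,1); that is, F''·g² ∈ L^∞(−1,1), so the Flory–Huggins potential satisfies the compatibility condition of assumption (A3) of the paper. -/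
/-- If `g` is `L`-Lipschitz on `[−1,1]` and vanishes at `±1`, then `g(x)² ≤ L²(1−x²)`;
consequently, for the Flory–Huggins potential (whose second derivative is
`F''(x) = θ/(1−x²) − θ₀`) one has `|F''(x)|·g(x)² ≤ (θ+θ₀)·L²` on `(−1,1)`, i.e. the
compatibility condition `F''·g² ∈ L^∞(−1,1)` of assumption (A3) holds. -/
theorem lipschitz_vanishing_compatibility (L : ℝ) (hL : 0 ≤ L)
    (g : ℝ → ℝ)
    (hg : ∀ x ∈ Set.Icc (-1:ℝ) 1, ∀ y ∈ Set.Icc (-1:ℝ) 1, |g x - g y| ≤ L * |x - y|)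
    (hg1 : g 1 = 0) (hgm1 : g (-1) = 0)
    (θ θ₀ : ℝ) (hθ : 0 < θ) (hθθ₀ : θ < θ₀) :
    (∀ x ∈ Set.Icc (-1:ℝ) 1, g x ^ 2 ≤ L^2 * (1 - x^2)) ∧
    (∀ x ∈ Set.Ioo (-1:ℝ) 1, |θ/(1 - x^2) - θ₀| * g x ^ 2 ≤ (θ + θ₀) * L^2) := by
  have h1 : ∀ x ∈ Set.Icc (-1:ℝ) 1, g x ^ 2 ≤ L^2 * (1 - x^2) := by
    intro x hx
    obtain ⟨hxl, hxr⟩ := hx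
    have ha : |g x| ≤ L * (1 - x) := by
      have := hg x ⟨hxl, hxr⟩ 1 ⟨by norm_num, le_refl 1⟩
      rw [hg1, sub_zero] at this
      calc |g x| ≤ L * |x - 1| := this
        _ = L * (1 - x) := by rw [abs_of_nonpos (by linarith)]; ring
    have hb : |g x| ≤ L * (1 + x) := by
      have := hg x ⟨hxl, hxr⟩ (-1) ⟨le_refl _, by norm_num⟩
      rw [hgm1, sub_zero] at this
      calc |g x| ≤ L * |x - (-1)| := this
        _ = L * (1 + x) := by rw [abs_of_nonneg (by linarith)]; ring
    have habs : (0:ℝ) ≤ |g x| := abs_nonneg _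
    rw [← sq_abs, sq]
    calc |g x| * |g x| ≤ (L * (1 - x)) * (L * (1 + x)) :=
          mul_le_mul ha hb habs (by nlinarith)
      _ = L^2 * (1 - x^2) := by ring
  refine ⟨h1, fun x hx => ?_⟩
  obtain ⟨hxl, hxr⟩ := hx
  have hx2 : 0 < 1 - x^2 := by nlinarith
  have hg2 := h1 x ⟨le_of_lt hxl, le_of_lt hxr⟩
  have hg2nn : 0 ≤ g x ^ 2 := sq_nonneg _
  have habs : |θ/(1 - x^2) - θ₀| ≤ θ/(1 - x^2) + θ₀ := by
    have h1' : 0 ≤ θ/(1 - x^2) := div_nonneg hθ.le hx2.le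
    rw [abs_le]
    constructor <;> [linarith; linarith]
  calc |θ/(1 - x^2) - θ₀| * g x ^ 2 ≤ (θ/(1 - x^2) + θ₀) * g x ^ 2 :=
        mul_le_mul_of_nonneg_right habs hg2nn
    _ = θ/(1 - x^2) * g x ^ 2 + θ₀ * g x ^ 2 := by ring
    _ ≤ θ/(1 - x^2) * (L^2 * (1 - x^2)) + θ₀ * (L^2 * (1 - x^2)) := by
        have h1' : 0 ≤ θ/(1 - x^2) := div_nonneg hθ.le hx2.le
        have h2' : 0 ≤ θ₀ := by linarith
        gcongr
    _ = θ * L^2 + θ₀ * L^2 * (1 - x^2) := by field_simp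
    _ ≤ θ * L^2 + θ₀ * L^2 := by
        nlinarith [mul_nonneg (mul_nonneg (show (0:ℝ) ≤ θ₀ by linarith) (sq_nonneg L)) (sq_nonneg x)]
    _ = (θ + θ₀) * L^2 := by ring
end
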